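/- arXiv:2004.00453 — 2 statements merged into one kernel-verified Lean document; each statement's English description precedes it below -/
import Mathlib

section
/- Let S = [[0, −1], [0, 1]] and T = [[0, 1], [0, 1]] in M₂(ℂ). Then S*T = 0 but S is not numerical-radius Birkhoff orthogonal to T; indeed ω(S) = (1+√2)/2 > 1 = ω(S − T). -/
open Filter Topology

/-- Numerical radius of a 2×2 complex matrix (w.r.t. the standard inner product). -/
noncomputable def numRad2 (A : Matrix (Fin 2) (Fin 2) ℂ) : ℝ :=
  sSup {r : ℝ | ∃ x : EuclideanSpace ℂ (Fin 2), ‖x‖ = 1 ∧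
    r = ‖(inner ℂ x ((WithLp.equiv 2 (Fin 2 → ℂ)).symm (A.mulVec x)) : ℂ)‖}

/-- Numerical radius Birkhoff orthogonality for 2×2 matrices. -/
def wBOrth2 (A B : Matrix (Fin 2) (Fin 2) ℂ) : Prop :=
  ∀ lam : ℂ, numRad2 A ≤ numRad2 (A + lam • B)

/-!
For a unit vector `x`, `⟪x, S x⟫ = -x̄₀ x₁ + |x₁|²`, so `ω(S)` is at most the maximum of
`uv + v²` on the unit circle, the top eigenvalue `(1 + √2)/2` of `[[0, 1/2], [1/2, 1]]`, and the
direction `(1 - √2, 1)` attains it. `S - T = [[0, -2], [0, 0]]` is nilpotent, with `ω = 1` by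
AM-GM, so `λ = -1` shows that `S` is not Birkhoff orthogonal to `T`.
-/

open Matrix

noncomputable def quadForm2 (A : Matrix (Fin 2) (Fin 2) ℂ) (x : EuclideanSpace ℂ (Fin 2)) : ℂ :=
  inner ℂ x ((WithLp.equiv 2 (Fin 2 → ℂ)).symm (A.mulVec x))

lemma quadForm2_apply (A : Matrix (Fin 2) (Fin 2) ℂ) (x : EuclideanSpace ℂ (Fin 2)) :
    quadForm2 A x
      = star (x 0) * (A 0 0 * x 0 + A 0 1 * x 1) + star (x 1) * (A 1 0 * x 0 + A 1 1 * x 1) := by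
  simp [quadForm2, PiLp.inner_apply, Fin.sum_univ_two, mul_comm]

lemma norm_quadForm2_smul (A : Matrix (Fin 2) (Fin 2) ℂ) (a : ℂ) (x : EuclideanSpace ℂ (Fin 2)) :
    ‖quadForm2 A (a • x)‖ = ‖a‖ ^ 2 * ‖quadForm2 A x‖ := by
  simp only [quadForm2, WithLp.ofLp_smul, mulVec_smul, WithLp.equiv_symm_apply,
    WithLp.toLp_smul, inner_smul_left, inner_smul_right, norm_mul, RCLike.norm_conj]
  ring

lemma numRad2_eq_of_forall_le_of_eq (A : Matrix (Fin 2) (Fin 2) ℂ) {c : ℝ}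
    (hle : ∀ x, ‖quadForm2 A x‖ ≤ c * ‖x‖ ^ 2) {x₀ : EuclideanSpace ℂ (Fin 2)} (hx₀ : x₀ ≠ 0)
    (heq : ‖quadForm2 A x₀‖ = c * ‖x₀‖ ^ 2) :
    numRad2 A = c := by
  refine IsGreatest.csSup_eq ⟨⟨(‖x₀‖⁻¹ : ℂ) • x₀, norm_smul_inv_norm hx₀, ?_⟩, ?_⟩
  · change c = ‖quadForm2 A _‖
    rw [norm_quadForm2_smul, heq, norm_inv, Complex.norm_real, norm_norm]
    field_simp [norm_ne_zero_iff.mpr hx₀]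
  · rintro r ⟨x, hx, rfl⟩
    exact (hle x).trans_eq (by rw [hx]; ring)

lemma EuclideanSpace.norm_sq_fin_two (x : EuclideanSpace ℂ (Fin 2)) :
    ‖x‖ ^ 2 = ‖x 0‖ ^ 2 + ‖x 1‖ ^ 2 := by
  simp [EuclideanSpace.norm_sq_eq, Fin.sum_univ_two]

lemma EuclideanSpace.toLp_fin_two_ne_zero {a b : ℂ} (hb : b ≠ 0) :
    !₂[a, b] ≠ 0 := fun h => hb (by simpa using congrArg (· 1) h)

lemma mul_add_sq_le_one_add_sqrt_two_div_two (u v : ℝ) :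
    u * v + v ^ 2 ≤ (1 + √2) / 2 * (u ^ 2 + v ^ 2) := by
  have hs : √2 ^ 2 = 2 := Real.sq_sqrt (by norm_num)
  have key : (1 + √2) / 2 * (u ^ 2 + v ^ 2) - (u * v + v ^ 2)
      = (1 + √2) / 2 * (u - (√2 - 1) * v) ^ 2 := by
    linear_combination (u * v - (√2 - 1) * v ^ 2 / 2) * hs
  linarith [(by positivity : 0 ≤ (1 + √2) / 2 * (u - (√2 - 1) * v) ^ 2)]

lemma numRad2_zero_neg_one_zero_one : numRad2 !![0, -1; 0, 1] = (1 + √2) / 2 := by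
  have hs : √2 ^ 2 = 2 := Real.sq_sqrt (by norm_num)
  refine numRad2_eq_of_forall_le_of_eq _ (fun x => ?_) (x₀ := !₂[((1 - √2 : ℝ) : ℂ), 1])
    (EuclideanSpace.toLp_fin_two_ne_zero one_ne_zero) ?_
  · rw [quadForm2_apply, EuclideanSpace.norm_sq_fin_two]
    calc ‖star (x 0) * (0 * x 0 + -1 * x 1) + star (x 1) * (0 * x 0 + 1 * x 1)‖
        ≤ ‖x 0‖ * ‖x 1‖ + ‖x 1‖ ^ 2 := by
          refine (norm_add_le _ _).trans_eq ?_
          simp [sq]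
      _ ≤ _ := mul_add_sq_le_one_add_sqrt_two_div_two _ _
  · rw [quadForm2_apply, EuclideanSpace.norm_sq_fin_two]
    simp only [of_apply, cons_val', cons_val_zero, cons_val_one, empty_val', cons_val_fin_one]
    have hval : star ((1 - √2 : ℝ) : ℂ) * (0 * ((1 - √2 : ℝ) : ℂ) + -1 * 1)
        + star 1 * (0 * ((1 - √2 : ℝ) : ℂ) + 1 * 1) = ((√2 : ℝ) : ℂ) := by
      simp only [Complex.star_def, Complex.conj_ofReal, star_one]
      push_cast
      ring
    rw [hval, Complex.norm_real, Complex.norm_real, norm_one, Real.norm_of_nonneg (by positivity),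
      Real.norm_eq_abs, sq_abs]
    linear_combination (1 - √2) / 2 * hs

lemma numRad2_strictUpper_fin_two (a : ℂ) : numRad2 !![0, a; 0, 0] = ‖a‖ / 2 := by
  refine numRad2_eq_of_forall_le_of_eq _ (fun x => ?_) (x₀ := !₂[1, 1])
    (EuclideanSpace.toLp_fin_two_ne_zero one_ne_zero) ?_
  · rw [quadForm2_apply, EuclideanSpace.norm_sq_fin_two]
    simp only [of_apply, cons_val', cons_val_zero, cons_val_one, empty_val', cons_val_fin_one,
      zero_mul, zero_add, add_zero, mul_zero, norm_mul, norm_star]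
    nlinarith [mul_nonneg (norm_nonneg a) (sq_nonneg (‖x 0‖ - ‖x 1‖))]
  · rw [quadForm2_apply, EuclideanSpace.norm_sq_fin_two]
    norm_num

theorem stmt_6 :
    let S : Matrix (Fin 2) (Fin 2) ℂ := !![0, -1; 0, 1]
    let T : Matrix (Fin 2) (Fin 2) ℂ := !![0, 1; 0, 1]
    S.conjTranspose * T = 0 ∧ ¬ wBOrth2 S T ∧
      numRad2 S = (1 + Real.sqrt 2) / 2 ∧ numRad2 (S - T) = 1 ∧
      numRad2 (S - T) < numRad2 S := by
  intro S T
  have hST : S - T = !![0, -2; 0, 0] := by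
    ext i j
    fin_cases i <;> fin_cases j <;> norm_num [S, T]
  have hST_rad : numRad2 (S - T) = 1 := by
    rw [hST, numRad2_strictUpper_fin_two]
    norm_num
  have hlt : numRad2 (S - T) < numRad2 S := by
    rw [hST_rad, numRad2_zero_neg_one_zero_one]
    linarith [Real.one_lt_sqrt_two]
  refine ⟨?_, fun horth => ?_, numRad2_zero_neg_one_zero_one, hST_rad, hlt⟩
  · ext i j
    fin_cases i <;> fin_cases j <;> simp [S, T, mul_apply, Fin.sum_univ_two]
  · have := horth (-1)
    rw [neg_one_smul, ← sub_eq_add_neg] at this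
    exact this.not_gt hlt
end

section
/- If T ⊥_{ωB} I (the identity operator), then I ⊥_{ωB} T. -/
open Filter Topology ComplexOrder

variable {H : Type*} [NormedAddCommGroup H] [InnerProductSpace ℂ H] [CompleteSpace H]

/-- The numerical radius of a bounded operator `T`:
`ω(T) = sup {|⟨Tx, x⟩| : ‖x‖ = 1}`. -/
noncomputable def numRad (T : H →L[ℂ] H) : ℝ :=
  sSup {r : ℝ | ∃ x : H, ‖x‖ = 1 ∧ r = ‖(inner ℂ x (T x) : ℂ)‖}

/-- Numerical radius Birkhoff orthogonality: `ω(T + λS) ≥ ω(T)` for all `λ ∈ ℂ`. -/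
def wBOrth (T S : H →L[ℂ] H) : Prop :=
  ∀ lam : ℂ, numRad T ≤ numRad (T + lam • S)

/-
Since `⟨(T + μI)x, x⟩ = ⟨Tx, x⟩ + μ` for unit `x`, `T ⊥_{ωB} I` says that no disc of radius smaller than
`ω(T)` contains the numerical range `W(T)`. Suppose `ω(I + λT) = s < 1`.
Then `λ ≠ 0` and, with `c = -λ⁻¹`, `W(T)` lies in the disc of radius `s|c|` about `c`. For `z` in this
disc and in the disc of radius `ω(T)` about `0`, the identity
`|z - tc|² = (1 - t)|z|² + t|z - c|² - t(1 - t)|c|²` with `t = (1 - s²)/2` gives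
`|z - tc|² ≤ ω(T)² - t²|c|²`, so `ω(T - tcI) < ω(T)`, contradicting `T ⊥_{ωB} I`.
-/

theorem norm_sub_smul_sq {F : Type*} [NormedAddCommGroup F] [InnerProductSpace ℝ F] (x y : F)
    (t : ℝ) :
    ‖x - t • y‖ ^ 2 = (1 - t) * ‖x‖ ^ 2 + t * ‖x - y‖ ^ 2 - t * (1 - t) * ‖y‖ ^ 2 := by
  rw [norm_sub_sq_real, norm_sub_sq_real, inner_smul_right, norm_smul, mul_pow,
    Real.norm_eq_abs, sq_abs]
  ring

theorem norm_sub_mul_sq_le {z c : ℂ} {R s : ℝ} (hs : s ^ 2 ≤ 1) (hz : ‖z‖ ≤ R)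
    (hzc : ‖z - c‖ ≤ s * ‖c‖) :
    ‖z - ((1 - s ^ 2) / 2 : ℝ) * c‖ ^ 2 ≤ R ^ 2 - ((1 - s ^ 2) / 2) ^ 2 * ‖c‖ ^ 2 := by
  have hz2 : ‖z‖ ^ 2 ≤ R ^ 2 := pow_le_pow_left₀ (norm_nonneg z) hz 2
  have hzc2 : ‖z - c‖ ^ 2 ≤ (s * ‖c‖) ^ 2 := pow_le_pow_left₀ (norm_nonneg _) hzc 2
  rw [← Complex.real_smul, norm_sub_smul_sq]
  nlinarith [sq_nonneg ‖c‖]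

section NumRad

variable {E : Type*} [NormedAddCommGroup E] [InnerProductSpace ℂ E]

theorem norm_inner_le_numRad (T : E →L[ℂ] E) {x : E} (hx : ‖x‖ = 1) :
    ‖inner ℂ x (T x)‖ ≤ numRad T := by
  refine le_csSup ⟨‖T‖, ?_⟩ ⟨x, hx, rfl⟩
  rintro r ⟨y, hy, rfl⟩
  simpa [hy] using (norm_inner_le_norm y (T y)).trans
    (mul_le_mul_of_nonneg_left (T.le_opNorm y) (norm_nonneg y))

theorem numRad_nonneg (T : E →L[ℂ] E) : 0 ≤ numRad T :=
  Real.sSup_nonneg fun _ ⟨_, _, hr⟩ => hr ▸ norm_nonneg _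

theorem numRad_le {T : E →L[ℂ] E} {r : ℝ} (h : ∀ x : E, ‖x‖ = 1 → ‖inner ℂ x (T x)‖ ≤ r)
    (hr : 0 ≤ r) : numRad T ≤ r :=
  Real.sSup_le (fun _ ⟨x, hx, hr⟩ => hr ▸ h x hx) hr

theorem inner_add_smul_one_apply (T : E →L[ℂ] E) (μ : ℂ) {x : E} (hx : ‖x‖ = 1) :
    inner ℂ x ((T + μ • 1) x) = inner ℂ x (T x) + μ := by
  simp [hx]

theorem inner_one_add_smul_apply (T : E →L[ℂ] E) (μ : ℂ) {x : E} (hx : ‖x‖ = 1) :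
    inner ℂ x ((1 + μ • T) x) = 1 + μ * inner ℂ x (T x) := by
  simp [hx]

theorem numRad_one_le : numRad (1 : E →L[ℂ] E) ≤ 1 :=
  numRad_le (fun x hx => by simp [hx]) zero_le_one

theorem not_wBOrth_one_of_forall_norm_sub_le {T : E →L[ℂ] E} {c : ℂ} {s : ℝ} (hc : c ≠ 0)
    (hs₀ : 0 ≤ s) (hs₁ : s < 1) {e : E} (he : ‖e‖ = 1)
    (hW : ∀ x : E, ‖x‖ = 1 → ‖inner ℂ x (T x) - c‖ ≤ s * ‖c‖) : ¬ wBOrth T 1 := by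
  intro hT
  set t : ℝ := (1 - s ^ 2) / 2
  set R := numRad T
  have ht : 0 < t := div_pos (by nlinarith) two_pos
  have hbound : ∀ x : E, ‖x‖ = 1 →
      ‖inner ℂ x ((T + (-(t * c)) • 1) x)‖ ^ 2 ≤ R ^ 2 - t ^ 2 * ‖c‖ ^ 2 := fun x hx => by
    rw [inner_add_smul_one_apply T _ hx, ← sub_eq_add_neg]
    exact norm_sub_mul_sq_le (by nlinarith) (norm_inner_le_numRad T hx) (hW x hx)
  have hlt : √(R ^ 2 - t ^ 2 * ‖c‖ ^ 2) < R := by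
    rw [Real.sqrt_lt ((sq_nonneg _).trans (hbound e he)) (numRad_nonneg T)]
    have : 0 < t ^ 2 * ‖c‖ ^ 2 := by positivity
    linarith
  exact hlt.not_ge <| (hT _).trans <|
    numRad_le (fun x hx => Real.le_sqrt_of_sq_le (hbound x hx)) (Real.sqrt_nonneg _)

end NumRad

theorem stmt_9 (T : H →L[ℂ] H) (h : wBOrth T 1) :
    wBOrth 1 T := by
  intro lam
  by_cases hH : ∃ e : H, ‖e‖ = 1
  swap
  · exact (numRad_le (fun x hx => absurd ⟨x, hx⟩ hH) le_rfl).trans (numRad_nonneg _)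
  obtain ⟨e, he⟩ := hH
  refine numRad_one_le.trans (not_lt.1 fun hs => ?_)
  have hW : ∀ x : H, ‖x‖ = 1 → ‖1 + lam * inner ℂ x (T x)‖ ≤ numRad (1 + lam • T) :=
    fun x hx => inner_one_add_smul_apply T lam hx ▸ norm_inner_le_numRad _ hx
  have hlam : lam ≠ 0 := by
    rintro rfl
    simpa using (hW e he).trans_lt hs
  refine not_wBOrth_one_of_forall_norm_sub_le (c := -lam⁻¹) (by simpa) (numRad_nonneg _) hs he
    (fun x hx => ?_) h
  calc ‖inner ℂ x (T x) - -lam⁻¹‖ = ‖lam⁻¹‖ * ‖1 + lam * inner ℂ x (T x)‖ := by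
        rw [← norm_mul]; congr 1; field_simp; ring
    _ ≤ numRad (1 + lam • T) * ‖-lam⁻¹‖ := by
        rw [norm_neg, mul_comm]; gcongr; exact hW x hx
end
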